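/- arXiv:1106.5076 — 2 statements merged into one kernel-verified Lean document; each statement's English description precedes it below -/
import Mathlib

section
/- Rank translation correctness: let Y be a sequence over [1..f] recording, for each element of a sorted list (by x-coordinate), the child index containing it. For a query rank interval [r1, r2] and a child τ, the elements of the query interval lying in child τ occupy exactly the rank interval [rank_τ(Y, r1−1)+1, rank_τ(Y, r2)] within child τ's x-sorted list, and this interval has size rank_τ(Y, r2) − rank_τ(Y, r1−1). -/
/-! Within the positions labelled `τ`, the rank `rnk Y τ (p + 1)` of `p` increases by exactly one
from each such position to the next. Hence positions labelled `τ` in the window `(a, b]` are sent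
injectively into `[rnk a + 1, rnk b]`, and counting shows they fill it, since the window holds
`rnk b - rnk a` of them. -/

def rnk {n f : ℕ} (Y : Fin n → Fin f) (τ : Fin f) (i : ℕ) : ℕ :=
  (Finset.univ.filter (fun j : Fin n => (j : ℕ) + 1 ≤ i ∧ Y j = τ)).card

namespace RankTranslation

open Finset

variable {n f : ℕ} (Y : Fin n → Fin f) (τ : Fin f)

theorem rnk_mono : Monotone (rnk Y τ) := fun _ _ hij =>
  card_le_card fun _ hp => by
    simp only [mem_filter] at hp ⊢
    exact ⟨hp.1, hp.2.1.trans hij, hp.2.2⟩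

theorem rnk_succ_of_eq {p : Fin n} (hp : Y p = τ) : rnk Y τ ((p : ℕ) + 1) = rnk Y τ p + 1 := by
  have hinsert : univ.filter (fun j : Fin n => (j : ℕ) + 1 ≤ p + 1 ∧ Y j = τ) =
      insert p (univ.filter fun j : Fin n => (j : ℕ) + 1 ≤ p ∧ Y j = τ) := by
    ext j
    simp only [mem_filter, mem_insert, mem_univ, true_and]
    constructor
    · rintro ⟨hj, hjτ⟩
      rcases Nat.eq_or_lt_of_le (Nat.le_of_succ_le_succ hj) with h | h
      · exact .inl (Fin.ext h)
      · exact .inr ⟨h, hjτ⟩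
    · rintro (rfl | ⟨hj, hjτ⟩)
      · exact ⟨le_rfl, hp⟩
      · exact ⟨by omega, hjτ⟩
  rw [rnk, hinsert, card_insert_of_notMem (by simp)]
  rfl

theorem rnk_succ_strictMonoOn :
    StrictMonoOn (fun p : Fin n => rnk Y τ ((p : ℕ) + 1)) {p | Y p = τ} := by
  intro p _ q hq hpq
  calc rnk Y τ ((p : ℕ) + 1) ≤ rnk Y τ q := rnk_mono Y τ (Fin.lt_def.mp hpq)
    _ < rnk Y τ ((q : ℕ) + 1) := by rw [rnk_succ_of_eq Y τ hq]; exact Nat.lt_succ_self _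

/-- Positions are 0-based, so `p` lies in the 1-based window `(a, b]` when `a < p + 1 ≤ b`. -/
def window (a b : ℕ) : Finset (Fin n) :=
  univ.filter fun p : Fin n => a < (p : ℕ) + 1 ∧ (p : ℕ) + 1 ≤ b ∧ Y p = τ

theorem card_window (a b : ℕ) : (window Y τ a b).card = rnk Y τ b - rnk Y τ a := by
  rcases le_total a b with hab | hba
  · have hsdiff : window Y τ a b =
        univ.filter (fun j : Fin n => (j : ℕ) + 1 ≤ b ∧ Y j = τ) \
          univ.filter (fun j : Fin n => (j : ℕ) + 1 ≤ a ∧ Y j = τ) := by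
      ext p
      simp only [window, mem_sdiff, mem_filter, mem_univ, true_and]
      omega
    rw [hsdiff, card_sdiff_of_subset, rnk, rnk]
    intro p hp
    simp only [mem_filter] at hp ⊢
    exact ⟨hp.1, hp.2.1.trans hab, hp.2.2⟩
  · have hempty : window Y τ a b = ∅ := filter_false_of_mem fun p _ => by omega
    rw [hempty, card_empty, Nat.sub_eq_zero_of_le (rnk_mono Y τ hba)]

theorem image_window (a b : ℕ) :
    (window Y τ a b).image (fun p : Fin n => rnk Y τ ((p : ℕ) + 1)) =
      Icc (rnk Y τ a + 1) (rnk Y τ b) := by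
  have hinj : Set.InjOn (fun p : Fin n => rnk Y τ ((p : ℕ) + 1)) (window Y τ a b) :=
    (rnk_succ_strictMonoOn Y τ).injOn.mono fun p hp => (mem_filter.mp hp).2.2.2
  refine eq_of_subset_of_card_le ?_ ?_
  · intro k hk
    obtain ⟨p, hp, rfl⟩ := mem_image.mp hk
    obtain ⟨hap, hpb, hpτ⟩ := (mem_filter.mp hp).2
    refine mem_Icc.mpr ⟨?_, rnk_mono Y τ hpb⟩
    rw [rnk_succ_of_eq Y τ hpτ]
    exact Nat.succ_le_succ (rnk_mono Y τ (by omega))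
  · rw [Nat.card_Icc, card_image_of_injOn hinj, card_window]
    omega

end RankTranslation

open RankTranslation in
theorem rank_translation_general (n f : ℕ) (Y : Fin n → Fin f) (τ : Fin f)
    (r1 r2 : ℕ) :
    (Finset.image (fun p : Fin n => rnk Y τ ((p : ℕ) + 1))
        (Finset.univ.filter
          (fun p : Fin n => r1 ≤ (p : ℕ) + 1 ∧ (p : ℕ) + 1 ≤ r2 ∧ Y p = τ)) =
      Finset.Icc (rnk Y τ (r1 - 1) + 1) (rnk Y τ r2)) ∧
    (Finset.univ.filter
        (fun p : Fin n => r1 ≤ (p : ℕ) + 1 ∧ (p : ℕ) + 1 ≤ r2 ∧ Y p = τ)).card =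
      rnk Y τ r2 - rnk Y τ (r1 - 1) := by
  -- `r1 ≤ p + 1 ↔ r1 - 1 < p + 1` holds also for `r1 = 0`, by truncated subtraction.
  have hwindow : Finset.univ.filter
      (fun p : Fin n => r1 ≤ (p : ℕ) + 1 ∧ (p : ℕ) + 1 ≤ r2 ∧ Y p = τ) = window Y τ (r1 - 1) r2 :=
    Finset.filter_congr fun p _ => by omega
  rw [hwindow]
  exact ⟨image_window Y τ _ _, card_window Y τ _ _⟩

/-- Rank translation correctness: the elements of the query rank interval
`[r1, r2]` lying in child `τ` occupy exactly the rank interval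
`[rank_τ(Y, r1−1)+1, rank_τ(Y, r2)]` within child `τ`'s list, and there are
`rank_τ(Y, r2) − rank_τ(Y, r1−1)` of them. -/
theorem rank_translation (n f : ℕ) (Y : Fin n → Fin f) (τ : Fin f)
    (r1 r2 : ℕ) (h1 : 1 ≤ r1) (h12 : r1 ≤ r2) (h2 : r2 ≤ n) :
    (Finset.image (fun p : Fin n => rnk Y τ ((p : ℕ) + 1))
        (Finset.univ.filter
          (fun p : Fin n => r1 ≤ (p : ℕ) + 1 ∧ (p : ℕ) + 1 ≤ r2 ∧ Y p = τ)) =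
      Finset.Icc (rnk Y τ (r1 - 1) + 1) (rnk Y τ r2)) ∧
    (Finset.univ.filter
        (fun p : Fin n => r1 ≤ (p : ℕ) + 1 ∧ (p : ℕ) + 1 ≤ r2 ∧ Y p = τ)).card =
      rnk Y τ r2 - rnk Y τ (r1 - 1) :=
  rank_translation_general n f Y τ r1 r2
end

section
/- Splitting update to the child-index string: let Y_p be a sequence over [1..f_p], let i ∈ [1..f_p], and let Y be a sequence over [1..f] whose length equals the number of occurrences of i in Y_p, with Y listing, in order, extra labels for the positions of Y_p equal to i. Fix d with 1 ≤ d ≤ f. Define Y'_p by: for each position, if Y_p's value c < i, output c; if c > i, output c+1; if c = i, output i if the corresponding entry of Y is ≤ d, and i+1 otherwise. Then Y'_p is a sequence over [1..f_p+1], the number of occurrences of i in Y'_p equals the number of entries of Y that are ≤ d, the number of occurrences of i+1 equals the number of entries of Y that are > d, and for every c < i (resp. c > i) the occurrences of c (resp. c+1) in Y'_p equal the occurrences of c in Y_p. -/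
/-- Splitting update of the parent's child-index string.  `Yp` is a sequence over
`[1..f_p]`, the `i`-th child is split according to labels `lab` in `[1..f]`
attached (in order) to the positions carrying value `i`: labels `≤ d` go to the
first new node and labels `> d` to the second.  The updated string `Y'p` is over
`[1..f_p+1]`; the occurrences of `i` (resp. `i+1`) in `Y'p` are the positions of
`i` in `Yp` with label `≤ d` (resp. `> d`), and the occurrence counts of every
other child index are preserved (shifted by one above `i`). -/
theorem split_child_string (m fp f i d : ℕ) (Yp lab Y'p : Fin m → ℕ)
    (hYp : ∀ p, 1 ≤ Yp p ∧ Yp p ≤ fp)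
    (hi1 : 1 ≤ i) (hi2 : i ≤ fp)
    (hlab : ∀ p, Yp p = i → 1 ≤ lab p ∧ lab p ≤ f)
    (hd1 : 1 ≤ d) (hd2 : d ≤ f)
    (hdef : ∀ p, Y'p p =
      if Yp p < i then Yp p
      else if i < Yp p then Yp p + 1
      else if lab p ≤ d then i else i + 1) :
    (∀ p, 1 ≤ Y'p p ∧ Y'p p ≤ fp + 1) ∧
    (Finset.univ.filter (fun p => Y'p p = i)).card =
      (Finset.univ.filter (fun p => Yp p = i ∧ lab p ≤ d)).card ∧
    (Finset.univ.filter (fun p => Y'p p = i + 1)).card =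
      (Finset.univ.filter (fun p => Yp p = i ∧ d < lab p)).card ∧
    (∀ c, c < i →
      (Finset.univ.filter (fun p => Y'p p = c)).card =
        (Finset.univ.filter (fun p => Yp p = c)).card) ∧
    (∀ c, i < c → c ≤ fp →
      (Finset.univ.filter (fun p => Y'p p = c + 1)).card =
        (Finset.univ.filter (fun p => Yp p = c)).card) := by
  refine ⟨fun p => ?_, ?_, ?_, fun c hc => ?_, fun c hc1 hc2 => ?_⟩
  · have h1 := hYp p; have h := hdef p
    split_ifs at h <;> omega
  · congr 1; ext p
    have h1 := hYp p; have h := hdef p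
    simp only [Finset.mem_filter, Finset.mem_univ, true_and]
    split_ifs at h <;> constructor <;> intro hh <;> omega
  · congr 1; ext p
    have h1 := hYp p; have h := hdef p
    simp only [Finset.mem_filter, Finset.mem_univ, true_and]
    split_ifs at h <;> constructor <;> intro hh <;> omega
  · congr 1; ext p
    have h1 := hYp p; have h := hdef p
    simp only [Finset.mem_filter, Finset.mem_univ, true_and]
    split_ifs at h <;> constructor <;> intro hh <;> omega
  · congr 1; ext p
    have h1 := hYp p; have h := hdef p
    simp only [Finset.mem_filter, Finset.mem_univ, true_and]
    split_ifs at h <;> constructor <;> intro hh <;> omega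
end
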